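/- Let n ≥ 1, Q = 2n+2, and let M be a constant 2n×2n real symmetric positive definite matrix. If the identity ((Q+2)/4)·⟨M ∇_H φ_M(x,t), ∇_H φ_M(x,t)⟩ = φ_M(x,t) · (𝓛_M φ_M)(x,t) holds for all (x,t) ∈ ℝ^{2n+1}, where φ_M(x,t) = ⟨M⁻¹x,x⟩² + t², then M is symplectic, i.e. M⁻¹ = Jᵗ M J. -/

import Mathlib

open MeasureTheory Set Matrix

noncomputable section

/-- Points of the Heisenberg group `ℍⁿ = ℝ^{2n} × ℝ`, written `z = (x, t)`. -/
abbrev Hpt (n : ℕ) := (Fin (2 * n) → ℝ) × ℝ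

/-- The standard symplectic matrix `J = (0, -Iₙ; Iₙ, 0)`. -/
def Jmat (n : ℕ) : Matrix (Fin (2 * n)) (Fin (2 * n)) ℝ :=
  Matrix.of fun i j =>
    if (i : ℕ) + n = (j : ℕ) then (-1 : ℝ) else if (j : ℕ) + n = (i : ℕ) then 1 else 0

/-- The Heisenberg group law `(x,t) ∘ (ξ,τ) = (x + ξ, t + τ + 2⟨Jx, ξ⟩)`. -/
def hmul {n : ℕ} (z w : Hpt n) : Hpt n :=
  (z.1 + w.1, z.2 + w.2 + 2 * ((Jmat n).mulVec z.1 ⬝ᵥ w.1))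

/-- The direction vector of the horizontal vector field `Xᵢ = ∂_{xᵢ} + 2(Jx)ᵢ ∂_t`
at a point with horizontal coordinates `x`. -/
def Xvec {n : ℕ} (x : Fin (2 * n) → ℝ) (i : Fin (2 * n)) : Hpt n :=
  (Pi.single i 1, 2 * (Jmat n).mulVec x i)

/-- The horizontal derivative `Xᵢ ψ`. -/
def Xd {n : ℕ} (i : Fin (2 * n)) (ψ : Hpt n → ℝ) (z : Hpt n) : ℝ :=
  fderiv ℝ ψ z (Xvec z.1 i)

/-- The horizontal gradient `∇_H ψ = (X₁ψ, …, X_{2n}ψ)`. -/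
def gradH {n : ℕ} (ψ : Hpt n → ℝ) (z : Hpt n) : Fin (2 * n) → ℝ := fun i => Xd i ψ z

/-- The operator `𝓛_A ψ = Σ_{i,j} a_{ij}(z) XᵢXⱼψ` for a (variable) coefficient matrix `A`. -/
def Lop {n : ℕ} (A : Hpt n → Matrix (Fin (2 * n)) (Fin (2 * n)) ℝ) (ψ : Hpt n → ℝ)
    (z : Hpt n) : ℝ :=
  ∑ i, ∑ j, A z i j * Xd i (Xd j ψ) z

/-- `φ_M(x,t) = ⟨M⁻¹x, x⟩² + t²`. -/
def phiM {n : ℕ} (M : Matrix (Fin (2 * n)) (Fin (2 * n)) ℝ) (z : Hpt n) : ℝ :=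
  (M⁻¹.mulVec z.1 ⬝ᵥ z.1) ^ 2 + z.2 ^ 2

/-- A matrix `M` is symplectic if `M⁻¹ = Jᵗ M J`. -/
def IsSymplecticMat {n : ℕ} (M : Matrix (Fin (2 * n)) (Fin (2 * n)) ℝ) : Prop :=
  M⁻¹ = (Jmat n)ᵀ * M * Jmat n

/-!
At `z = (x, t)` put `a = M⁻¹x`, `b = Jx`, `u = ⟨a, x⟩` and `w = ⟨b, Mb⟩`. Since `J` is skew,
`⟨x, Jx⟩ = 0` and `tr(MJ) = 0`, and a direct computation gives `∇_H φ_M = 4u a + 4t b`,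
`⟨M ∇_H φ_M, ∇_H φ_M⟩ = 16u³ + 16t²w` and `𝓛_M φ_M = 8(n+1)u + 8w`. The identity thus becomes a
polynomial identity in `t`, whose `t²`-coefficients give `(n+1)(u - w) = 0`. So the symmetric
matrices `M⁻¹` and `JᵀMJ` have the same quadratic form, hence are equal.
-/

section

variable {m : Type*} [Fintype m]

lemma dotProduct_mulVec_self_eq_zero_of_transpose_eq_neg {A : Matrix m m ℝ} (hA : Aᵀ = -A)
    (x : m → ℝ) : x ⬝ᵥ A *ᵥ x = 0 := by
  have h : x ⬝ᵥ A *ᵥ x = -(x ⬝ᵥ A *ᵥ x) := by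
    conv_lhs =>
      rw [dotProduct_mulVec, ← mulVec_transpose, hA, neg_mulVec, neg_dotProduct, dotProduct_comm]
  linarith

lemma trace_mul_eq_zero_of_isSymm_of_transpose_eq_neg {A B : Matrix m m ℝ} (hA : A.IsSymm)
    (hB : Bᵀ = -B) : (A * B).trace = 0 := by
  have h : (A * B).trace = -(A * B).trace := by
    conv_lhs =>
      rw [← trace_transpose, transpose_mul, hB, hA.eq, neg_mul, trace_neg, trace_mul_comm]
  linarith

lemma sum_sum_mul_mul_eq_dotProduct_mulVec (A : Matrix m m ℝ) (v : m → ℝ) :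
    ∑ i, ∑ j, A i j * (v i * v j) = v ⬝ᵥ A *ᵥ v := by
  rw [dot_mulVec_eq_sum_sum, Finset.sum_comm]
  exact Finset.sum_congr rfl fun i _ => Finset.sum_congr rfl fun j _ => by ring

lemma sum_sum_mul_eq_trace_mul (A B : Matrix m m ℝ) :
    ∑ i, ∑ j, A i j * B j i = (A * B).trace :=
  rfl

lemma Matrix.IsSymm.ext_of_mulVec_dotProduct [DecidableEq m] {A B : Matrix m m ℝ}
    (hA : A.IsSymm) (hB : B.IsSymm) (h : ∀ x, A *ᵥ x ⬝ᵥ x = B *ᵥ x ⬝ᵥ x) : A = B := by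
  ext i j
  have hij := h (Pi.single i 1 + Pi.single j 1)
  have hi := h (Pi.single i 1)
  have hj := h (Pi.single j 1)
  simp only [mulVec_add, dotProduct_add, mulVec_single_one, col_apply,
    Pi.add_apply, dotProduct_single_one] at hij hi hj
  have := hA.apply i j
  have := hB.apply i j
  linarith

end

lemma Jmat_transpose (n : ℕ) : (Jmat n)ᵀ = -Jmat n := by
  ext i j
  have := i.isLt
  simp only [Jmat, transpose_apply, Matrix.neg_apply, of_apply]
  split_ifs <;> first | omega | norm_num

variable {n : ℕ}

def fstDotCLM (c : Fin (2 * n) → ℝ) : Hpt n →L[ℝ] ℝ :=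
  LinearMap.toContinuousLinearMap (dotProductBilin ℝ ℝ c ∘ₗ LinearMap.fst ℝ _ ℝ)

@[simp] lemma fstDotCLM_apply (c : Fin (2 * n) → ℝ) (v : Hpt n) : fstDotCLM c v = c ⬝ᵥ v.1 :=
  rfl

lemma hasFDerivAt_dotProduct_fst (c : Fin (2 * n) → ℝ) (z : Hpt n) :
    HasFDerivAt (fun w : Hpt n => c ⬝ᵥ w.1) (fstDotCLM c) z :=
  (fstDotCLM c).hasFDerivAt

lemma hasFDerivAt_mulVec_fst_apply (B : Matrix (Fin (2 * n)) (Fin (2 * n)) ℝ) (j : Fin (2 * n))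
    (z : Hpt n) : HasFDerivAt (fun w : Hpt n => (B *ᵥ w.1) j) (fstDotCLM (B j)) z :=
  hasFDerivAt_dotProduct_fst (B j) z

lemma hasFDerivAt_mulVec_fst_dotProduct_fst (A : Matrix (Fin (2 * n)) (Fin (2 * n)) ℝ)
    (z : Hpt n) :
    HasFDerivAt (fun w : Hpt n => A *ᵥ w.1 ⬝ᵥ w.1) (fstDotCLM ((A + Aᵀ) *ᵥ z.1)) z := by
  have hcoord (k : Fin (2 * n)) :
      HasFDerivAt (fun w : Hpt n => w.1 k) (fstDotCLM (Pi.single k 1)) z := by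
    simpa only [single_one_dotProduct] using hasFDerivAt_dotProduct_fst (Pi.single k 1) z
  have h := HasFDerivAt.fun_sum (u := Finset.univ) fun k _ =>
    (hasFDerivAt_mulVec_fst_apply A k z).mul (hcoord k)
  refine h.congr_fderiv (ContinuousLinearMap.ext fun v => ?_)
  simp only [_root_.sum_apply, _root_.add_apply, _root_.smul_apply, fstDotCLM_apply,
    single_one_dotProduct, smul_eq_mul, Finset.sum_add_distrib, add_mulVec, add_dotProduct,
    mulVec_transpose, ← dotProduct_mulVec]
  rfl

lemma Xd_eq_of_hasFDerivAt {ψ : Hpt n → ℝ} {L : Hpt n →L[ℝ] ℝ} {z : Hpt n}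
    (h : HasFDerivAt ψ L z) (i : Fin (2 * n)) : Xd i ψ z = L (Xvec z.1 i) := by
  rw [Xd, h.fderiv]

section PhiM

variable {M : Matrix (Fin (2 * n)) (Fin (2 * n)) ℝ}

lemma Xd_phiM (hM : M.IsSymm) (j : Fin (2 * n)) (z : Hpt n) :
    Xd j (phiM M) z =
      4 * (M⁻¹ *ᵥ z.1 ⬝ᵥ z.1) * (M⁻¹ *ᵥ z.1) j + 4 * z.2 * (Jmat n *ᵥ z.1) j := by
  have hq := hasFDerivAt_mulVec_fst_dotProduct_fst M⁻¹ z
  have ht : HasFDerivAt (fun w : Hpt n => w.2) (ContinuousLinearMap.snd ℝ _ ℝ) z :=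
    hasFDerivAt_snd
  rw [Xd_eq_of_hasFDerivAt (ψ := phiM M) ((hq.pow 2).add (ht.pow 2))]
  simp only [Nat.add_one_sub_one, pow_one, nsmul_eq_mul, Nat.cast_ofNat, hM.inv.eq, add_mulVec,
    Xvec, _root_.add_apply, _root_.smul_apply, fstDotCLM_apply, dotProduct_single, Pi.add_apply,
    mul_one, smul_eq_mul, ContinuousLinearMap.coe_snd']
  ring

lemma Xd_Xd_phiM (hM : M.IsSymm) (i j : Fin (2 * n)) (z : Hpt n) :
    Xd i (Xd j (phiM M)) z =
      8 * (M⁻¹ *ᵥ z.1) i * (M⁻¹ *ᵥ z.1) j + 4 * (M⁻¹ *ᵥ z.1 ⬝ᵥ z.1) * M⁻¹ j i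
        + 8 * (Jmat n *ᵥ z.1) i * (Jmat n *ᵥ z.1) j + 4 * z.2 * Jmat n j i := by
  have hq := hasFDerivAt_mulVec_fst_dotProduct_fst M⁻¹ z
  have ht : HasFDerivAt (fun w : Hpt n => w.2) (ContinuousLinearMap.snd ℝ _ ℝ) z :=
    hasFDerivAt_snd
  have h := ((hq.const_mul 4).mul (hasFDerivAt_mulVec_fst_apply M⁻¹ j z)).add
    ((ht.const_mul 4).mul (hasFDerivAt_mulVec_fst_apply (Jmat n) j z))
  rw [funext (Xd_phiM hM j)]
  refine (Xd_eq_of_hasFDerivAt h i).trans ?_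
  simp only [hM.inv.eq, add_mulVec, Xvec, _root_.add_apply, _root_.smul_apply, fstDotCLM_apply,
    dotProduct_single, mul_one, smul_eq_mul, Pi.add_apply, ContinuousLinearMap.coe_snd']
  ring

lemma gradH_phiM (hM : M.IsSymm) (x : Fin (2 * n) → ℝ) (t : ℝ) :
    gradH (phiM M) (x, t) = (4 * (M⁻¹ *ᵥ x ⬝ᵥ x)) • M⁻¹ *ᵥ x + (4 * t) • Jmat n *ᵥ x := by
  ext j
  simp [gradH, Xd_phiM hM]

lemma mulVec_gradH_phiM_dotProduct (hM : M.IsSymm) (hdet : IsUnit M.det)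
    (x : Fin (2 * n) → ℝ) (t : ℝ) :
    M *ᵥ gradH (phiM M) (x, t) ⬝ᵥ gradH (phiM M) (x, t) =
      16 * (M⁻¹ *ᵥ x ⬝ᵥ x) ^ 3 + 16 * t ^ 2 * (Jmat n *ᵥ x ⬝ᵥ M *ᵥ Jmat n *ᵥ x) := by
  have hMx : M *ᵥ M⁻¹ *ᵥ x = x := by rw [mulVec_mulVec, mul_nonsing_inv M hdet, one_mulVec]
  have hxJx := dotProduct_mulVec_self_eq_zero_of_transpose_eq_neg (Jmat_transpose n) x
  have hcross : M *ᵥ Jmat n *ᵥ x ⬝ᵥ M⁻¹ *ᵥ x = 0 := by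
    rw [dotProduct_comm, dotProduct_mulVec, ← mulVec_transpose, hM.eq, hMx, hxJx]
  rw [gradH_phiM hM]
  simp only [mulVec_add, mulVec_smul, add_dotProduct, dotProduct_add, smul_dotProduct,
    dotProduct_smul, smul_eq_mul, hMx, hcross]
  rw [hxJx, dotProduct_comm x, dotProduct_comm (M *ᵥ _)]
  ring

lemma Lop_phiM (hM : M.IsSymm) (hdet : IsUnit M.det) (x : Fin (2 * n) → ℝ) (t : ℝ) :
    Lop (fun _ => M) (phiM M) (x, t) =
      8 * (n + 1) * (M⁻¹ *ᵥ x ⬝ᵥ x) + 8 * (Jmat n *ᵥ x ⬝ᵥ M *ᵥ Jmat n *ᵥ x) := by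
  set a := M⁻¹ *ᵥ x
  set b := Jmat n *ᵥ x
  have hterm (i j : Fin (2 * n)) : M i j * Xd i (Xd j (phiM M)) (x, t) =
      8 * (M i j * (a i * a j)) + 4 * (a ⬝ᵥ x) * (M i j * M⁻¹ j i)
        + 8 * (M i j * (b i * b j)) + 4 * t * (M i j * Jmat n j i) := by
    rw [Xd_Xd_phiM hM]
    ring
  have hMa : M *ᵥ a = x := by rw [mulVec_mulVec, mul_nonsing_inv M hdet, one_mulVec]
  have htrace : (M * M⁻¹).trace = 2 * n := by
    rw [mul_nonsing_inv M hdet, trace_one, Fintype.card_fin, Nat.cast_mul, Nat.cast_ofNat]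
  simp only [Lop, hterm, Finset.sum_add_distrib, ← Finset.mul_sum,
    sum_sum_mul_mul_eq_dotProduct_mulVec, sum_sum_mul_eq_trace_mul, hMa, htrace,
    trace_mul_eq_zero_of_isSymm_of_transpose_eq_neg hM (Jmat_transpose n)]
  rw [dotProduct_comm a x]
  ring

lemma inv_mulVec_dotProduct_self_eq_of_identity (hM : M.IsSymm) (hdet : IsUnit M.det)
    (hid : ∀ z : Hpt n, (2 * n + 2 + 2) / 4 * (M *ᵥ gradH (phiM M) z ⬝ᵥ gradH (phiM M) z) =
      phiM M z * Lop (fun _ => M) (phiM M) z)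
    (x : Fin (2 * n) → ℝ) : M⁻¹ *ᵥ x ⬝ᵥ x = Jmat n *ᵥ x ⬝ᵥ M *ᵥ Jmat n *ᵥ x := by
  have e (t : ℝ) := hid (x, t)
  simp only [mulVec_gradH_phiM_dotProduct hM hdet, Lop_phiM hM hdet, phiM] at e
  have h : ((n : ℝ) + 1) * (M⁻¹ *ᵥ x ⬝ᵥ x - Jmat n *ᵥ x ⬝ᵥ M *ᵥ Jmat n *ᵥ x) = 0 := by
    linear_combination (e 0 - e 1) / 8
  rcases mul_eq_zero.mp h with h | h
  · exact absurd h (by positivity)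
  · linarith

end PhiM

theorem stmt1_general (n : ℕ) (Q : ℝ) (hQ : Q = 2 * n + 2)
    (M : Matrix (Fin (2 * n)) (Fin (2 * n)) ℝ)
    (hsymm : M.IsSymm) (hpos : M.PosDef)
    (hid : ∀ z : Hpt n,
      (Q + 2) / 4 * (M.mulVec (gradH (phiM M) z) ⬝ᵥ gradH (phiM M) z) =
        phiM M z * Lop (fun _ => M) (phiM M) z) :
    IsSymplecticMat M := by
  subst hQ
  have hdet : IsUnit M.det := (isUnit_iff_isUnit_det M).mp hpos.isUnit
  have hJMJ : ((Jmat n)ᵀ * M * Jmat n).IsSymm := by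
    rw [IsSymm, transpose_mul, transpose_mul, transpose_transpose, hsymm.eq, Matrix.mul_assoc]
  refine hsymm.inv.ext_of_mulVec_dotProduct hJMJ fun x => ?_
  rw [inv_mulVec_dotProduct_self_eq_of_identity hsymm hdet hid x, ← mulVec_mulVec,
    ← mulVec_mulVec, mulVec_transpose, ← dotProduct_mulVec, dotProduct_comm]

/-- Lemma 3.2, converse part. If the identity
`((Q+2)/4)·⟨M ∇_H φ_M, ∇_H φ_M⟩ = φ_M · 𝓛_M φ_M` holds everywhere for a constant
symmetric positive definite matrix `M`, with `Q = 2n+2`, then `M` is symplectic. -/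
theorem stmt1 (n : ℕ) (hn : 1 ≤ n) (Q : ℝ) (hQ : Q = 2 * n + 2)
    (M : Matrix (Fin (2 * n)) (Fin (2 * n)) ℝ)
    (hsymm : M.IsSymm) (hpos : M.PosDef)
    (hid : ∀ z : Hpt n,
      (Q + 2) / 4 * (M.mulVec (gradH (phiM M) z) ⬝ᵥ gradH (phiM M) z) =
        phiM M z * Lop (fun _ => M) (phiM M) z) :
    IsSymplecticMat M :=
  stmt1_general n Q hQ M hsymm hpos hid

end
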